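/- arXiv:1809.01672 — 2 statements merged into one kernel-verified Lean document; each statement's English description precedes it below -/
import Mathlib

section
/- Let |φ⟩ be a unit vector in ℂ^d and {P_i}_{i=1}^{d²} the Weyl–Heisenberg operators. Consider the state discrimination problem for the ensemble {1/d², P_i|φ⟩} and the POVM N_i = (1/d) P_i |φ⟩⟨φ| P_i†. Then the success probability Σ_i (1/d²) Tr(N_i P_i|φ⟩⟨φ|P_i†) equals 1/d, and {N_i} is optimal: for every POVM {M_i}, Σ_i (1/d²) Tr(M_i P_i|φ⟩⟨φ|P_i†) ≤ 1/d. -/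
open Matrix ComplexOrder

def shiftMatrix (d : ℕ) : Matrix (Fin d) (Fin d) ℂ :=
  fun i j => if (i : ℕ) = ((j : ℕ) + 1) % d then 1 else 0

noncomputable def clockMatrix (d : ℕ) : Matrix (Fin d) (Fin d) ℂ :=
  Matrix.diagonal fun j => Complex.exp (2 * Real.pi * Complex.I / d) ^ (j : ℕ)

noncomputable def weylOp (d : ℕ) (a b : Fin d) : Matrix (Fin d) (Fin d) ℂ :=
  shiftMatrix d ^ (a : ℕ) * clockMatrix d ^ (b : ℕ)

def outer {n : Type*} (u v : n → ℂ) : Matrix n n ℂ :=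
  fun a b => u a * (starRingEnd ℂ) (v b)

lemma shift_ct_mul (d : ℕ) (hd : 0 < d) : (shiftMatrix d)ᴴ * shiftMatrix d = 1 := by
  ext i j
  simp only [mul_apply, conjTranspose_apply, shiftMatrix, apply_ite (star (R := ℂ)), star_one, star_zero]
  rw [Finset.sum_eq_single (⟨((i : ℕ) + 1) % d, Nat.mod_lt _ hd⟩ : Fin d)]
  · by_cases h : i = j
    · subst h; simp
    · have h' : ((i : ℕ) + 1) % d ≠ ((j : ℕ) + 1) % d := by
        intro hm
        exact h (Fin.ext ((Nat.ModEq.add_right_cancel' 1 hm).eq_of_lt_of_lt i.isLt j.isLt))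
      simp [h, h']
  · intro k _ hk
    have : (k : ℕ) ≠ ((i : ℕ) + 1) % d := fun h => hk (Fin.ext h)
    simp [this]
  · simp

lemma shift_mul_ct (d : ℕ) (hd : 0 < d) : shiftMatrix d * (shiftMatrix d)ᴴ = 1 :=
  mul_eq_one_comm.mp (shift_ct_mul d hd)

lemma clock_ct_mul (d : ℕ) : (clockMatrix d)ᴴ * clockMatrix d = 1 := by
  have hz : (starRingEnd ℂ) (2 * Real.pi * Complex.I / d) = -(2 * Real.pi * Complex.I / d) := by
    simp [map_div₀, Complex.conj_I, map_ofNat]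
    ring
  ext i j
  simp only [clockMatrix, diagonal_conjTranspose, diagonal_mul_diagonal]
  rw [Matrix.diagonal_apply]
  by_cases h : i = j
  · subst h
    simp only [Pi.star_apply, RingHom.coe_comp, Function.comp_apply, if_pos trivial]
    have h1 : (starRingEnd ℂ) (Complex.exp (2 * Real.pi * Complex.I / d))
        * Complex.exp (2 * Real.pi * Complex.I / d) = 1 := by
      rw [← Complex.exp_conj, ← Complex.exp_add, hz, neg_add_cancel, Complex.exp_zero]
    rw [one_apply_eq, star_pow, ← mul_pow]
    rw [show star (Complex.exp (2 * Real.pi * Complex.I / d)) = (starRingEnd ℂ) (Complex.exp (2 * Real.pi * Complex.I / d)) from rfl, h1, one_pow]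
  · simp [h]


lemma clock_mul_ct (d : ℕ) : clockMatrix d * (clockMatrix d)ᴴ = 1 :=
  mul_eq_one_comm.mp (clock_ct_mul d)

lemma weyl_mem_unitary (d : ℕ) (hd : 0 < d) (a b : Fin d) :
    weylOp d a b ∈ unitary (Matrix (Fin d) (Fin d) ℂ) := by
  have hs : shiftMatrix d ∈ unitary (Matrix (Fin d) (Fin d) ℂ) :=
    Unitary.mem_iff.mpr ⟨shift_ct_mul d hd, shift_mul_ct d hd⟩
  have hc : clockMatrix d ∈ unitary (Matrix (Fin d) (Fin d) ℂ) :=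
    Unitary.mem_iff.mpr ⟨clock_ct_mul d, clock_mul_ct d⟩
  exact mul_mem (pow_mem hs _) (pow_mem hc _)

lemma weyl_ct_mul (d : ℕ) (hd : 0 < d) (a b : Fin d) :
    (weylOp d a b)ᴴ * weylOp d a b = 1 :=
  (Unitary.mem_iff.mp (weyl_mem_unitary d hd a b)).1

-- outer product lemmas
variable {d : ℕ}

lemma sum_conj_mul (φ : Fin d → ℂ) (hφ : ∑ j, Complex.normSq (φ j) = 1) :
    ∑ k, (starRingEnd ℂ) (φ k) * φ k = 1 := by
  have : ∀ k, (starRingEnd ℂ) (φ k) * φ k = ((Complex.normSq (φ k) : ℝ) : ℂ) := by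
    intro k; rw [mul_comm, Complex.mul_conj]
  rw [Finset.sum_congr rfl fun k _ => this k, ← Complex.ofReal_sum, hφ, Complex.ofReal_one]

lemma outer_mul_outer (φ : Fin d → ℂ) (hφ : ∑ j, Complex.normSq (φ j) = 1) :
    outer φ φ * outer φ φ = outer φ φ := by
  ext i j
  simp only [mul_apply, outer]
  calc ∑ k, φ i * (starRingEnd ℂ) (φ k) * (φ k * (starRingEnd ℂ) (φ j))
      = (φ i * (starRingEnd ℂ) (φ j)) * ∑ k, (starRingEnd ℂ) (φ k) * φ k := by
        rw [Finset.mul_sum]; exact Finset.sum_congr rfl fun k _ => by ring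
    _ = φ i * (starRingEnd ℂ) (φ j) := by rw [sum_conj_mul φ hφ, mul_one]

lemma trace_outer (φ : Fin d → ℂ) (hφ : ∑ j, Complex.normSq (φ j) = 1) :
    (outer φ φ).trace = 1 := by
  simp only [trace, diag, outer]
  calc ∑ k, φ k * (starRingEnd ℂ) (φ k) = ∑ k, (starRingEnd ℂ) (φ k) * φ k :=
        Finset.sum_congr rfl fun k _ => mul_comm _ _
    _ = 1 := sum_conj_mul φ hφ

lemma outer_posSemidef (φ : Fin d → ℂ) : (outer φ φ).PosSemidef := by
  have : outer φ φ = Matrix.replicateCol Unit φ * (Matrix.replicateCol Unit φ)ᴴ := by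
    ext i j; simp [outer, mul_apply, Matrix.replicateCol]
  rw [this]
  exact Matrix.posSemidef_self_mul_conjTranspose _

lemma psd_trace_re_nonneg {n : Type*} [Fintype n] [DecidableEq n]
    {A : Matrix n n ℂ} (hA : A.PosSemidef) : 0 ≤ A.trace.re := by
  have h : ∀ i, 0 ≤ (A i i).re := by
    intro i
    have := hA.dotProduct_mulVec_nonneg (Pi.single i 1)
    simp only [dotProduct, mulVec, Pi.single_apply] at this
    rw [Complex.le_def] at this
    simpa [dotProduct, mulVec, Pi.single_apply, Finset.sum_ite_eq',
      Finset.sum_ite_eq] using this.1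
  rw [trace, Complex.re_sum]
  exact Finset.sum_nonneg fun i _ => h i


/-- Discriminating the uniform Weyl–Heisenberg orbit of a pure state: the POVM
`N_i = (1/d) P_i|φ⟩⟨φ|P_i†` achieves success probability `1/d`, and it is
optimal among all POVMs. -/
theorem weyl_orbit_discrimination {d : ℕ} (hd : 0 < d) (φ : Fin d → ℂ)
    (hφ : ∑ j, Complex.normSq (φ j) = 1) :
    let ρ : Fin d → Fin d → Matrix (Fin d) (Fin d) ℂ := fun a b =>
      weylOp d a b * outer φ φ * (weylOp d a b)ᴴ
    let N : Fin d → Fin d → Matrix (Fin d) (Fin d) ℂ := fun a b =>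
      ((d : ℂ)⁻¹) • ρ a b
    (∑ a : Fin d, ∑ b : Fin d,
        (((d : ℝ) ^ 2)⁻¹) * (N a b * ρ a b).trace.re = 1 / d) ∧
    ∀ M : Fin d → Fin d → Matrix (Fin d) (Fin d) ℂ,
      (∀ a b, (M a b).PosSemidef) → (∑ a : Fin d, ∑ b : Fin d, M a b = 1) →
      ∑ a : Fin d, ∑ b : Fin d, (((d : ℝ) ^ 2)⁻¹) * (M a b * ρ a b).trace.re ≤ 1 / d := by
  intro ρ N
  have hdR : ((d : ℝ)) ≠ 0 := Nat.cast_ne_zero.mpr hd.ne'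
  set O := outer φ φ with hO
  -- key matrix identities
  have hrho_sq : ∀ a b, ρ a b * ρ a b = ρ a b := by
    intro a b
    show (weylOp d a b * O * (weylOp d a b)ᴴ) * (weylOp d a b * O * (weylOp d a b)ᴴ) = _
    simp only [Matrix.mul_assoc]
    rw [← Matrix.mul_assoc (weylOp d a b)ᴴ (weylOp d a b), weyl_ct_mul d hd a b, Matrix.one_mul,
      ← Matrix.mul_assoc O O, outer_mul_outer φ hφ, ← Matrix.mul_assoc]
  have hrho_tr : ∀ a b, (ρ a b).trace = 1 := by
    intro a b
    show (weylOp d a b * O * (weylOp d a b)ᴴ).trace = 1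
    rw [Matrix.trace_mul_comm, ← Matrix.mul_assoc, weyl_ct_mul d hd a b, Matrix.one_mul,
      trace_outer φ hφ]
  have hrho_psd : ∀ a b, (ρ a b).PosSemidef := fun a b =>
    (outer_posSemidef φ).mul_mul_conjTranspose_same _
  -- part 1
  have hterm : ∀ a b : Fin d, (N a b * ρ a b).trace.re = (d : ℝ)⁻¹ := by
    intro a b
    show (((d : ℂ)⁻¹ • ρ a b) * ρ a b).trace.re = _
    rw [Matrix.smul_mul, Matrix.trace_smul, hrho_sq a b, hrho_tr a b, smul_eq_mul, mul_one]
    rw [show ((d : ℂ))⁻¹ = (((d : ℝ)⁻¹ : ℝ) : ℂ) by push_cast; ring]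
    exact Complex.ofReal_re _
  have h1 : ∑ a : Fin d, ∑ b : Fin d,
      (((d : ℝ) ^ 2)⁻¹) * (N a b * ρ a b).trace.re = 1 / d := by
    simp only [hterm, Finset.sum_const, Finset.card_univ, Fintype.card_fin, nsmul_eq_mul]
    field_simp
  refine ⟨h1, ?_⟩
  -- part 2: optimality
  intro M hM hMsum
  have key : ∀ a b : Fin d, (M a b * ρ a b).trace.re ≤ (M a b).trace.re := by
    intro a b
    have hherm : (ρ a b).IsHermitian := (hrho_psd a b).1
    set B := (1 : Matrix (Fin d) (Fin d) ℂ) - ρ a b with hB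
    have hBh : Bᴴ = B := by rw [hB, Matrix.conjTranspose_sub, Matrix.conjTranspose_one, hherm.eq]
    have hBB : Bᴴ * B = B := by
      rw [hBh, hB, Matrix.sub_mul, Matrix.mul_sub, Matrix.mul_sub, Matrix.one_mul,
        Matrix.mul_one, Matrix.one_mul, hrho_sq a b]
      abel
    have hnn : 0 ≤ (M a b * B).trace.re := by
      have hBB' : B * B = B := by nth_rewrite 1 [← hBh]; exact hBB
      have : (M a b * B).trace = (B * M a b * Bᴴ).trace := by
        conv_lhs => rw [← hBB']
        rw [← Matrix.mul_assoc, Matrix.trace_mul_comm, ← Matrix.mul_assoc, hBh]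
      rw [this]
      exact psd_trace_re_nonneg ((hM a b).mul_mul_conjTranspose_same B)
    have hsplit : (M a b * B).trace = (M a b).trace - (M a b * ρ a b).trace := by
      rw [hB, Matrix.mul_sub, Matrix.mul_one, Matrix.trace_sub]
    rw [hsplit, Complex.sub_re] at hnn
    linarith
  calc ∑ a : Fin d, ∑ b : Fin d, (((d : ℝ) ^ 2)⁻¹) * (M a b * ρ a b).trace.re
      ≤ ∑ a : Fin d, ∑ b : Fin d, (((d : ℝ) ^ 2)⁻¹) * (M a b).trace.re := by
        refine Finset.sum_le_sum fun a _ => Finset.sum_le_sum fun b _ => ?_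
        exact mul_le_mul_of_nonneg_left (key a b) (by positivity)
    _ = (((d : ℝ) ^ 2)⁻¹) * (∑ a : Fin d, ∑ b : Fin d, M a b).trace.re := by
        rw [Matrix.trace_sum]
        simp only [Matrix.trace_sum, Complex.re_sum, Finset.mul_sum]
    _ = 1 / d := by
        rw [hMsum, Matrix.trace_one]
        simp only [Fintype.card_fin]
        rw [show (((d : ℕ) : ℂ)).re = (d : ℝ) by simp]
        field_simp
end

section
/- Holevo–Yuen–Kennedy–Lax sufficiency: let {(q_i, ρ_i)}_{i=1}^n be an ensemble of density matrices with probabilities q_i, and {M_i} a POVM such that Σ_i q_i ρ_i M_i − q_j ρ_j ⪰ 0 (positive semidefinite) for all j. Then for every POVM {N_i}, Σ_i q_i Tr(N_i ρ_i) ≤ Σ_i q_i Tr(M_i ρ_i), i.e., {M_i} maximizes the discrimination success probability. -/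
open Matrix ComplexOrder

def IsDensityMatrix {d : ℕ} (ρ : Matrix (Fin d) (Fin d) ℂ) : Prop :=
  ρ.PosSemidef ∧ ρ.trace = 1

lemma psd_trace_re_nonneg_s15 {d : ℕ} {P : Matrix (Fin d) (Fin d) ℂ}
    (hP : P.PosSemidef) : 0 ≤ P.trace.re := by
  have h : ∀ i, 0 ≤ (P i i).re := by
    intro i
    have h0 := hP.dotProduct_mulVec_nonneg (Pi.single i 1)
    have : star (Pi.single i 1 : Fin d → ℂ) ⬝ᵥ P.mulVec (Pi.single i 1) = P i i := by
      simp [dotProduct, mulVec, Pi.single_apply, apply_ite, Finset.sum_ite_eq]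
    rw [this] at h0
    exact (Complex.le_def.mp h0).1
  rw [Matrix.trace, Complex.re_sum]
  exact Finset.sum_nonneg fun i _ => h i

open scoped MatrixOrder in
lemma trace_mul_re_nonneg {d : ℕ} {A B : Matrix (Fin d) (Fin d) ℂ}
    (hA : A.PosSemidef) (hB : B.PosSemidef) : 0 ≤ (A * B).trace.re := by
  have hs : CFC.sqrt B * CFC.sqrt B = B := CFC.sqrt_mul_sqrt_self B hB.nonneg
  have h1 : (A * B).trace = (CFC.sqrt B * A * CFC.sqrt B).trace := by
    rw [show A * B = A * (CFC.sqrt B * CFC.sqrt B) from by rw [hs], ← mul_assoc,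
      trace_mul_comm, mul_assoc]
  rw [h1]
  have : (CFC.sqrt B * A * (CFC.sqrt B)ᴴ).PosSemidef := hA.mul_mul_conjTranspose_same (CFC.sqrt B)
  rw [(CFC.sqrt_nonneg B).posSemidef.isHermitian.eq] at this
  exact psd_trace_re_nonneg_s15 this

/-- Holevo–Yuen–Kennedy–Lax sufficient optimality condition for minimum-error
state discrimination. -/
theorem hykl_sufficiency {d n : ℕ} (q : Fin n → ℝ) (hq : ∀ i, 0 ≤ q i)
    (hq1 : ∑ i, q i = 1)
    (ρ : Fin n → Matrix (Fin d) (Fin d) ℂ) (hρ : ∀ i, IsDensityMatrix (ρ i))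
    (M : Fin n → Matrix (Fin d) (Fin d) ℂ)
    (hM : ∀ i, (M i).PosSemidef) (hMsum : ∑ i, M i = 1)
    (hopt : ∀ j, ((∑ i, (q i : ℂ) • (ρ i * M i)) - (q j : ℂ) • ρ j).PosSemidef) :
    ∀ N : Fin n → Matrix (Fin d) (Fin d) ℂ,
      (∀ i, (N i).PosSemidef) → (∑ i, N i = 1) →
      ∑ i, q i * (N i * ρ i).trace.re ≤ ∑ i, q i * (M i * ρ i).trace.re := by
  intro N hN hNsum
  set Y : Matrix (Fin d) (Fin d) ℂ := ∑ i, (q i : ℂ) • (ρ i * M i) with hY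
  have key : ∀ i, q i * (N i * ρ i).trace.re ≤ (N i * Y).trace.re := by
    intro i
    have h0 := trace_mul_re_nonneg (hN i) (hopt i)
    have hexp : (N i * (Y - (q i : ℂ) • ρ i)).trace
        = (N i * Y).trace - (q i : ℂ) * (N i * ρ i).trace := by
      rw [mul_sub, Matrix.mul_smul]
      simp [trace_sub, trace_smul]
    rw [hexp] at h0
    have : ((q i : ℂ) * (N i * ρ i).trace).re = q i * (N i * ρ i).trace.re := by
      simp [Complex.mul_re]
    simp only [Complex.sub_re, this, sub_nonneg] at h0
    exact h0
  calc ∑ i, q i * (N i * ρ i).trace.re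
      ≤ ∑ i, (N i * Y).trace.re := Finset.sum_le_sum fun i _ => key i
    _ = Y.trace.re := by
        rw [← Complex.re_sum, ← trace_sum, ← Finset.sum_mul, hNsum, one_mul]
    _ = ∑ i, q i * (M i * ρ i).trace.re := by
        rw [hY, trace_sum, Complex.re_sum]
        congr 1; ext i
        rw [trace_smul, trace_mul_comm]
        simp [Complex.mul_re]
end
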